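/- Sufficiency of the maximal invariant implies predictive invariance: under the setting of a finite group G acting on finite 𝒳 with maximal invariant η, if I(X;Y) = I(η(X);Y) (equivalently X ⟂ Y | η(X)), then for every g ∈ G and every x such that both x and g·x have positive μ_X-probability, μ_{Y|X}(·|x) = μ_{Y|X}(·|g·x). -/

import Mathlib

open Finset

noncomputable section

/-- Marginal distribution of the first coordinate of a joint distribution. -/
def margX {X Y : Type*} [Fintype Y] (μ : X → Y → ℝ) (x : X) : ℝ := ∑ y, μ x y

/-- Marginal distribution of the second coordinate. -/
def margY {X Y : Type*} [Fintype X] (μ : X → Y → ℝ) (y : Y) : ℝ := ∑ x, μ x y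

/-- Distribution of `U = η X`. -/
def margU {X Y U : Type*} [Fintype X] [Fintype Y] [DecidableEq U]
    (μ : X → Y → ℝ) (η : X → U) (u : U) : ℝ :=
  ∑ x, if η x = u then margX μ x else 0

/-- Joint probability `P(Y = y, η X = u)`. -/
def margYU {X Y U : Type*} [Fintype X] [DecidableEq U]
    (μ : X → Y → ℝ) (η : X → U) (y : Y) (u : U) : ℝ :=
  ∑ x, if η x = u then μ x y else 0

/-- Joint distribution of the pair `(η X, Y)`. -/
def jointUY {X Y U : Type*} [Fintype X] [DecidableEq U]
    (μ : X → Y → ℝ) (η : X → U) : U → Y → ℝ :=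
  fun u y => margYU μ η y u

/-- Shannon mutual information `I(X;Y)` of a joint distribution (natural log). -/
def MI {X Y : Type*} [Fintype X] [Fintype Y] (μ : X → Y → ℝ) : ℝ :=
  ∑ x, ∑ y, μ x y * Real.log (μ x y / (margX μ x * margY μ y))

/-- Conditional Shannon entropy `H(Y|X)`. -/
def condEnt {X Y : Type*} [Fintype X] [Fintype Y] (μ : X → Y → ℝ) : ℝ :=
  -∑ x, ∑ y, μ x y * Real.log (μ x y / margX μ x)

/-- Conditional mutual information `I(X;Y|U)` where `U = η X` is a deterministic
function of `X`. -/
def condMI {X Y U : Type*} [Fintype X] [Fintype Y] [DecidableEq U]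
    (μ : X → Y → ℝ) (η : X → U) : ℝ :=
  ∑ x, ∑ y, μ x y *
    Real.log (μ x y * margU μ η (η x) / (margX μ x * margYU μ η y (η x)))

/-- `μ` is a probability distribution on `X × Y`. -/
def IsDist {X Y : Type*} [Fintype X] [Fintype Y] (μ : X → Y → ℝ) : Prop :=
  (∀ x y, 0 ≤ μ x y) ∧ ∑ x, ∑ y, μ x y = 1

/-- `X` and `Y` are conditionally independent given `U = η X`: for every `u` with
`P(U = u) > 0`, `P(X = x, Y = y | U = u) = P(X = x | U = u) · P(Y = y | U = u)`
(stated multiplied through by `P(U = u)²`). -/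
def CondIndep {X Y U : Type*} [Fintype X] [Fintype Y] [DecidableEq U]
    (μ : X → Y → ℝ) (η : X → U) : Prop :=
  ∀ u, 0 < margU μ η u → ∀ x y,
    (if η x = u then μ x y else 0) * margU μ η u =
      (if η x = u then margX μ x else 0) * margYU μ η y u

/-- Cross-entropy risk `E_{(X,Y)∼μ}[− log v(Y|X)]` of a predictive conditional
distribution `v`. -/
def risk {X Y : Type*} [Fintype X] [Fintype Y] (μ : X → Y → ℝ) (v : X → Y → ℝ) : ℝ :=
  ∑ x, ∑ y, μ x y * (-Real.log (v x y))

/-- Kullback–Leibler divergence between two joint distributions on `X × Y`. -/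
def KL {X Y : Type*} [Fintype X] [Fintype Y] (μ ν : X → Y → ℝ) : ℝ :=
  ∑ x, ∑ y, μ x y * Real.log (μ x y / ν x y)

/-- Averaged conditional KL divergence `D(μ_{Y|X} ‖ v | μ_X)`. -/
def avgKL {X Y : Type*} [Fintype X] [Fintype Y] (μ : X → Y → ℝ) (v : X → Y → ℝ) : ℝ :=
  ∑ x, margX μ x * ∑ y,
    (μ x y / margX μ x) * Real.log ((μ x y / margX μ x) / v x y)

/-- Averaged conditional KL divergence in the latent domain:
`D(μ_{Y|U} ‖ v | μ_U)` for the encoder `η`. -/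
def decKL {X Y U : Type*} [Fintype X] [Fintype Y] [Fintype U] [DecidableEq U]
    (μ : X → Y → ℝ) (η : X → U) (v : U → Y → ℝ) : ℝ :=
  ∑ u, margU μ η u * ∑ y,
    (margYU μ η y u / margU μ η u) *
      Real.log ((margYU μ η y u / margU μ η u) / v u y)

/-!
Because `η X` is a function of `X`, the gap `I(X;Y) - I(η X;Y)` is the Kullback–Leibler
divergence of `μ` from the law `markovJoint μ η` under which `Y` is drawn from `μ_{Y|η X}`.
If the gap vanishes, the equality case of Gibbs' inequality gives `μ = markovJoint μ η`, so
`μ_{Y|X}(· | x)` depends on `x` only through `η x`, which is constant on `G`-orbits.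
-/

open Real InformationTheory

lemma mul_log_div_sub_add_eq_mul_klFun {p q : ℝ} (hp : 0 ≤ p) (hpq : 0 < p → 0 < q) :
    p * log (p / q) - p + q = q * klFun (p / q) := by
  rcases hp.eq_or_lt with rfl | hp
  · simp [klFun_zero]
  · have hq := hpq hp
    rw [klFun_apply]
    field_simp
    ring

lemma eq_of_sum_mul_log_div_eq_zero {ι : Type*} [Fintype ι] {p q : ι → ℝ}
    (hp : ∀ i, 0 ≤ p i) (hq : ∀ i, 0 ≤ q i) (hpq : ∀ i, 0 < p i → 0 < q i)
    (hsum : ∑ i, p i = ∑ i, q i) (hKL : ∑ i, p i * log (p i / q i) = 0) (i : ι) :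
    p i = q i := by
  have hterm : ∀ i, 0 ≤ q i * klFun (p i / q i) := fun i ↦
    mul_nonneg (hq i) (klFun_nonneg (div_nonneg (hp i) (hq i)))
  have htotal : ∑ i, q i * klFun (p i / q i) = 0 := by
    simp only [← mul_log_div_sub_add_eq_mul_klFun (hp _) (hpq _), Finset.sum_add_distrib,
      Finset.sum_sub_distrib, hKL, hsum]
    ring
  have hi : q i * klFun (p i / q i) = 0 :=
    congrFun ((Fintype.sum_eq_zero_iff_of_nonneg hterm).mp htotal) i
  rcases (hq i).eq_or_lt with hq0 | hqi
  · by_contra hne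
    rw [← hq0] at hne
    exact (hpq i (lt_of_le_of_ne (hp i) (Ne.symm hne))).ne' hq0.symm
  · have := (klFun_eq_zero_iff (div_nonneg (hp i) hqi.le)).mp
      ((mul_eq_zero.mp hi).resolve_left hqi.ne')
    exact (div_eq_one_iff_eq hqi.ne').mp this

/-- The joint law of `X` together with a label drawn from `μ_{Y|U}(· | η X)`;
`μ` equals it exactly when `X ⟂ Y | η X`. -/
def markovJoint {X Y U : Type*} [Fintype X] [Fintype Y] [DecidableEq U]
    (μ : X → Y → ℝ) (η : X → U) (x : X) (y : Y) : ℝ :=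
  margX μ x * (margYU μ η y (η x) / margU μ η (η x))

section Marginals

variable {X Y U : Type*} [DecidableEq U] (μ : X → Y → ℝ) (η : X → U)

lemma sum_margYU_mul [Fintype X] [Fintype U] (y : Y) (φ : U → ℝ) :
    ∑ u, margYU μ η y u * φ u = ∑ x, μ x y * φ (η x) := by
  simp only [margYU, Finset.sum_mul, ite_mul, zero_mul]
  rw [Finset.sum_comm]
  simp

lemma sum_margYU_left [Fintype X] [Fintype Y] (u : U) :
    ∑ y, margYU μ η y u = margU μ η u := by
  simp only [margYU, margU, margX]
  rw [Finset.sum_comm]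
  exact Finset.sum_congr rfl fun x _ ↦ by split_ifs <;> simp

lemma margX_jointUY [Fintype X] [Fintype Y] (u : U) :
    margX (jointUY μ η) u = margU μ η u :=
  sum_margYU_left μ η u

lemma margY_jointUY [Fintype X] [Fintype U] (y : Y) :
    margY (jointUY μ η) y = margY μ y := by
  simpa [margY, jointUY] using sum_margYU_mul μ η y 1

lemma MI_jointUY [Fintype X] [Fintype Y] [Fintype U] :
    MI (jointUY μ η) =
      ∑ x, ∑ y, μ x y * log (margYU μ η y (η x) / (margU μ η (η x) * margY μ y)) := by
  simp only [MI, margX_jointUY, margY_jointUY, jointUY]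
  rw [Finset.sum_comm]
  simp only [sum_margYU_mul μ η _ fun u ↦ log (margYU μ η _ u / (margU μ η u * margY μ _))]
  exact Finset.sum_comm

variable {μ} (h0 : ∀ x y, 0 ≤ μ x y)
include h0

lemma margX_nonneg [Fintype Y] (x : X) : 0 ≤ margX μ x := Finset.sum_nonneg fun y _ ↦ h0 x y

lemma le_margX [Fintype Y] (x : X) (y : Y) : μ x y ≤ margX μ x :=
  Finset.single_le_sum (fun y _ ↦ h0 x y) (Finset.mem_univ y)

lemma le_margY [Fintype X] (x : X) (y : Y) : μ x y ≤ margY μ y :=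
  Finset.single_le_sum (fun x _ ↦ h0 x y) (Finset.mem_univ x)

lemma margYU_nonneg [Fintype X] (y : Y) (u : U) : 0 ≤ margYU μ η y u :=
  Finset.sum_nonneg fun x _ ↦ by split_ifs <;> simp [h0]

lemma margU_nonneg [Fintype X] [Fintype Y] (u : U) : 0 ≤ margU μ η u :=
  Finset.sum_nonneg fun x _ ↦ by split_ifs <;> simp [margX_nonneg h0]

lemma le_margYU [Fintype X] (x : X) (y : Y) : μ x y ≤ margYU μ η y (η x) := by
  simpa [margYU] using Finset.single_le_sum (f := fun z ↦ if η z = η x then μ z y else 0)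
    (fun z _ ↦ by split_ifs <;> simp [h0]) (Finset.mem_univ x)

lemma margX_le_margU [Fintype X] [Fintype Y] (x : X) : margX μ x ≤ margU μ η (η x) := by
  simpa [margU] using Finset.single_le_sum (f := fun z ↦ if η z = η x then margX μ z else 0)
    (fun z _ ↦ by split_ifs <;> simp [margX_nonneg h0]) (Finset.mem_univ x)

end Marginals

section MarkovJoint

variable {X Y U : Type*} [Fintype X] [Fintype Y] [DecidableEq U] {μ : X → Y → ℝ} (η : X → U)
  (h0 : ∀ x y, 0 ≤ μ x y)
include h0

lemma markovJoint_nonneg (x : X) (y : Y) : 0 ≤ markovJoint μ η x y :=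
  mul_nonneg (margX_nonneg h0 x) (div_nonneg (margYU_nonneg η h0 y _) (margU_nonneg η h0 _))

lemma markovJoint_pos {x : X} {y : Y} (h : 0 < μ x y) : 0 < markovJoint μ η x y := by
  have hX := h.trans_le (le_margX h0 x y)
  have hYU := h.trans_le (le_margYU η h0 x y)
  have hU := hX.trans_le (margX_le_margU η h0 x)
  unfold markovJoint
  positivity

lemma sum_markovJoint (x : X) : ∑ y, markovJoint μ η x y = margX μ x := by
  simp only [markovJoint, ← Finset.mul_sum, ← Finset.sum_div, sum_margYU_left]
  rcases (margX_nonneg h0 x).eq_or_lt with hX | hX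
  · simp [← hX]
  · rw [div_self (hX.trans_le (margX_le_margU η h0 x)).ne', mul_one]

lemma MI_sub_MI_jointUY [Fintype U] :
    MI μ - MI (jointUY μ η) = ∑ x, ∑ y, μ x y * log (μ x y / markovJoint μ η x y) := by
  rw [MI, MI_jointUY, ← Finset.sum_sub_distrib]
  refine Finset.sum_congr rfl fun x _ ↦ ?_
  rw [← Finset.sum_sub_distrib]
  refine Finset.sum_congr rfl fun y _ ↦ ?_
  rw [← mul_sub]
  rcases (h0 x y).eq_or_lt with h | h
  · simp [← h]
  have hX := h.trans_le (le_margX h0 x y)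
  have hY := h.trans_le (le_margY h0 x y)
  have hYU := h.trans_le (le_margYU η h0 x y)
  have hU := hX.trans_le (margX_le_margU η h0 x)
  rw [← log_div (by positivity) (by positivity), markovJoint]
  congr 2
  field_simp

theorem eq_markovJoint_of_MI_eq [Fintype U] (hsuf : MI μ = MI (jointUY μ η)) (x : X) (y : Y) :
    μ x y = markovJoint μ η x y := by
  have hKL : ∑ x, ∑ y, μ x y * log (μ x y / markovJoint μ η x y) = 0 := by
    rw [← MI_sub_MI_jointUY η h0, hsuf, sub_self]
  have hsum : ∑ x, ∑ y, μ x y = ∑ x, ∑ y, markovJoint μ η x y := by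
    simp only [sum_markovJoint η h0, margX]
  simp only [← Fintype.sum_prod_type'] at hKL hsum
  exact eq_of_sum_mul_log_div_eq_zero (ι := X × Y) (fun p ↦ h0 p.1 p.2)
    (fun p ↦ markovJoint_nonneg η h0 p.1 p.2) (fun p ↦ markovJoint_pos η h0) hsum hKL (x, y)

end MarkovJoint

theorem stmt17_general {G X Y U : Type*} [Group G] [Fintype X] [Fintype Y]
    [Fintype U] [DecidableEq U] [MulAction G X]
    (μ : X → Y → ℝ) (hμ : IsDist μ) (η : X → U)
    (hmax : ∀ x z : X, η x = η z ↔ ∃ g : G, z = g • x)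
    (hsuf : MI μ = MI (jointUY μ η)) :
    ∀ (g : G) (x : X), 0 < margX μ x → 0 < margX μ (g • x) →
      ∀ y, μ x y / margX μ x = μ (g • x) y / margX μ (g • x) := by
  intro g x hx hgx y
  have hcond : ∀ z, 0 < margX μ z →
      μ z y / margX μ z = margYU μ η y (η z) / margU μ η (η z) := fun z hz ↦ by
    rw [eq_markovJoint_of_MI_eq η hμ.1 hsuf, markovJoint, mul_div_cancel_left₀ _ hz.ne']
  rw [hcond x hx, hcond (g • x) hgx, (hmax x (g • x)).mpr ⟨g, rfl⟩]

/-- sufficiency of the maximal invariant implies predictive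
invariance: if `I(X;Y) = I(η(X);Y)` for `η` maximal invariant, then
`μ_{Y|X}(·|x) = μ_{Y|X}(·|g·x)` whenever both points have positive probability. -/
theorem stmt17 {G X Y U : Type*} [Group G] [Fintype G] [Fintype X] [Fintype Y]
    [Fintype U] [DecidableEq U] [MulAction G X]
    (μ : X → Y → ℝ) (hμ : IsDist μ) (η : X → U)
    (hmax : ∀ x z : X, η x = η z ↔ ∃ g : G, z = g • x)
    (hsuf : MI μ = MI (jointUY μ η)) :
    ∀ (g : G) (x : X), 0 < margX μ x → 0 < margX μ (g • x) →
      ∀ y, μ x y / margX μ x = μ (g • x) y / margX μ (g • x) :=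
  stmt17_general μ hμ η hmax hsuf
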